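/- The 5-vertex graph that is the complement of the disjoint union of K_2 and the path P_3 on three vertices is minimally unlabellable: it is not labellable, but every proper induced subgraph of it is labellable. -/

import Mathlib

/-- `H` is labellable: for some positive integer `k` the vertices of `H` can be
injectively labelled by `k`-element subsets of `ℕ` so that two distinct vertices
are adjacent if and only if their labels intersect in a set of size `k - 1`. -/
def Labellable {V : Type*} (H : SimpleGraph V) : Prop :=
  ∃ k : ℕ, 0 < k ∧ ∃ ℓ : V → Finset ℕ, Function.Injective ℓ ∧
    (∀ v, (ℓ v).card = k) ∧
    ∀ u v : V, u ≠ v → (H.Adj u v ↔ (ℓ u ∩ ℓ v).card = k - 1)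

/-- The disjoint union of `K₂` (on vertices `0, 1`) and the path `P₃` (on
vertices `2, 3, 4`, with edges `2-3` and `3-4`), as a graph on `Fin 5`. -/
def K2PlusP3 : SimpleGraph (Fin 5) :=
  SimpleGraph.fromRel (fun a b =>
    (a = 0 ∧ b = 1) ∨ (a = 2 ∧ b = 3) ∨ (a = 3 ∧ b = 4))

/-!
Two vertices are adjacent iff their labels differ by exchanging one element, i.e. iff
`#(ℓ u \ ℓ v) = 1`. If `u`, `v` are non-adjacent with a common neighbour, then
`ℓ u \ ℓ v = {x₁, x₂}` and `ℓ v \ ℓ u = {y₁, y₂}`, and every common neighbour is labelled by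
`ℓ u` with one `xᵢ` exchanged for one `yⱼ`. Two such labels are non-adjacent only if they differ
in both choices, so for common neighbours `a ≁ b ≁ c` the labels of `a` and `c` make the same
choices, forcing `a = c`. In `K2PlusP3ᶜ` the vertices `0, 1` and `2, 3, 4` form such a
configuration. The five vertex-deleted subgraphs are labelled explicitly by `2`-sets.
-/

open Finset

namespace Finset

variable {α : Type*} [DecidableEq α] {A B C : Finset α}

theorem sdiff_subset_sdiff_of_card_add_le (h : #(A \ B) + #(B \ C) ≤ #(A \ C)) :
    A \ B ⊆ A \ C ∧ B \ C ⊆ A \ C := by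
  have hsplit : A \ C ⊆ (A \ B) \ C ∪ (B \ C) ∩ A := by
    intro x; simp only [mem_sdiff, mem_union, mem_inter]; tauto
  have h₁ : #((A \ B) \ C) ≤ #(A \ B) := card_le_card sdiff_subset
  have h₂ : #((B \ C) ∩ A) ≤ #(B \ C) := card_le_card inter_subset_left
  have h₃ := (card_le_card hsplit).trans (card_union_le _ _)
  have e₁ : (A \ B) \ C = A \ B := eq_of_subset_of_card_le sdiff_subset (by omega)
  have e₂ : (B \ C) ∩ A = B \ C := eq_of_subset_of_card_le inter_subset_left (by omega)
  constructor
  · intro x hx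
    rw [← e₁] at hx
    simp only [mem_sdiff] at hx ⊢; tauto
  · intro x hx
    rw [← e₂] at hx
    simp only [mem_sdiff, mem_inter] at hx ⊢; tauto

theorem eq_of_sdiff_eq_of_sdiff_eq (h₁ : A \ B = A \ C) (h₂ : B \ A = C \ A) : B = C := by
  ext x
  have := congrArg (x ∈ ·) h₁
  have := congrArg (x ∈ ·) h₂
  simp only [mem_sdiff, eq_iff_iff] at *
  tauto

theorem sdiff_subset_sdiff_of_sdiff_left_eq (h : A \ B = A \ C) : B \ C ⊆ B \ A := by
  intro x hx
  have := congrArg (x ∈ ·) h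
  simp only [mem_sdiff, eq_iff_iff] at *
  tauto

theorem sdiff_subset_sdiff_of_sdiff_right_eq (h : B \ A = C \ A) : B \ C ⊆ A \ C := by
  intro x hx
  have := congrArg (x ∈ ·) h
  simp only [mem_sdiff, eq_iff_iff] at *
  tauto

theorem eq_of_ne_of_ne_of_card_le_two {s : Finset α} (hs : #s ≤ 2)
    {x y z : α} (hx : x ∈ s) (hy : y ∈ s) (hz : z ∈ s) (hxy : x ≠ y) (hyz : y ≠ z) : x = z := by
  by_contra hxz
  have h3 : #{x, y, z} = 3 := card_eq_three.2 ⟨x, y, z, hxy, hxz, hyz, rfl⟩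
  have := card_le_card (insert_subset hx (insert_subset hy (singleton_subset_iff.2 hz)))
  omega

end Finset

structure IsJohnsonLabelling {V α : Type*} [DecidableEq α] (G : SimpleGraph V) (k : ℕ)
    (ℓ : V → Finset α) : Prop where
  injective : Function.Injective ℓ
  card_eq : ∀ v, #(ℓ v) = k
  adj_iff : ∀ {u v}, u ≠ v → (G.Adj u v ↔ #(ℓ u \ ℓ v) = 1)

theorem Labellable.exists_isJohnsonLabelling {V : Type*} {G : SimpleGraph V}
    (hG : Labellable G) : ∃ (k : ℕ) (ℓ : V → Finset ℕ), IsJohnsonLabelling G k ℓ := by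
  obtain ⟨k, hk, ℓ, hinj, hcard, hadj⟩ := hG
  refine ⟨k, ℓ, hinj, hcard, fun {u v} huv => ?_⟩
  have := card_sdiff_add_card_inter (ℓ u) (ℓ v)
  rw [hadj u v huv, hcard u] at *
  omega

namespace IsJohnsonLabelling

variable {V α : Type*} [DecidableEq α] {G : SimpleGraph V} {k : ℕ} {ℓ : V → Finset α}
  {u v w a b c : V}

theorem card_sdiff_comm (hℓ : IsJohnsonLabelling G k ℓ) (u v : V) :
    #(ℓ u \ ℓ v) = #(ℓ v \ ℓ u) :=
  Finset.card_sdiff_comm ((hℓ.card_eq u).trans (hℓ.card_eq v).symm)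

theorem card_sdiff_pos (hℓ : IsJohnsonLabelling G k ℓ) (huv : u ≠ v) : 0 < #(ℓ u \ ℓ v) := by
  refine card_pos.2 (sdiff_nonempty.2 fun hsub => huv (hℓ.injective ?_))
  exact eq_of_subset_of_card_le hsub (by rw [hℓ.card_eq, hℓ.card_eq])

theorem adj_of_card_sdiff_le_one (hℓ : IsJohnsonLabelling G k ℓ) (huv : u ≠ v)
    (h : #(ℓ u \ ℓ v) ≤ 1) : G.Adj u v :=
  (hℓ.adj_iff huv).2 (le_antisymm h (hℓ.card_sdiff_pos huv))

theorem card_sdiff_eq_two (hℓ : IsJohnsonLabelling G k ℓ) (huv : u ≠ v) (hnuv : ¬ G.Adj u v)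
    (hw : w ∈ G.commonNeighbors u v) : #(ℓ u \ ℓ v) = 2 := by
  obtain ⟨huw, hvw⟩ := G.mem_commonNeighbors.1 hw
  have htriangle : #(ℓ u \ ℓ v) ≤ #(ℓ u \ ℓ w) + #(ℓ w \ ℓ v) :=
    (card_le_card (sdiff_triangle _ (ℓ w) _)).trans (card_union_le _ _)
  rw [(hℓ.adj_iff huw.ne).1 huw, (hℓ.adj_iff hvw.ne.symm).1 hvw.symm] at htriangle
  have hne : #(ℓ u \ ℓ v) ≠ 1 := fun h => hnuv ((hℓ.adj_iff huv).2 h)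
  have := hℓ.card_sdiff_pos huv
  omega

theorem sdiff_subset_of_mem_commonNeighbors (hℓ : IsJohnsonLabelling G k ℓ) (huv : u ≠ v)
    (hnuv : ¬ G.Adj u v) (hw : w ∈ G.commonNeighbors u v) :
    ℓ u \ ℓ w ⊆ ℓ u \ ℓ v ∧ ℓ w \ ℓ u ⊆ ℓ v \ ℓ u := by
  obtain ⟨huw, hvw⟩ := G.mem_commonNeighbors.1 hw
  have huv₂ := hℓ.card_sdiff_eq_two huv hnuv hw
  have hvu₂ : #(ℓ v \ ℓ u) = 2 := hℓ.card_sdiff_comm v u ▸ huv₂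
  have huw₁ := (hℓ.adj_iff huw.ne).1 huw
  have hvw₁ := (hℓ.adj_iff hvw.ne).1 hvw
  refine ⟨(sdiff_subset_sdiff_of_card_add_le ?_).1, (sdiff_subset_sdiff_of_card_add_le ?_).2⟩
  · rw [huw₁, hℓ.card_sdiff_comm, hvw₁, huv₂]
  · rw [hvw₁, hℓ.card_sdiff_comm, huw₁, hvu₂]

theorem sdiff_ne_of_not_adj (hℓ : IsJohnsonLabelling G k ℓ) (hua : G.Adj u a) (hab : a ≠ b)
    (hnab : ¬ G.Adj a b) : ℓ u \ ℓ a ≠ ℓ u \ ℓ b ∧ ℓ a \ ℓ u ≠ ℓ b \ ℓ u := by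
  have hua₁ : #(ℓ u \ ℓ a) = 1 := (hℓ.adj_iff hua.ne).1 hua
  have hau₁ : #(ℓ a \ ℓ u) = 1 := hℓ.card_sdiff_comm u a ▸ hua₁
  refine ⟨fun h => hnab (hℓ.adj_of_card_sdiff_le_one hab ?_),
    fun h => hnab (hℓ.adj_of_card_sdiff_le_one hab.symm ?_).symm⟩
  · exact hau₁ ▸ card_le_card (sdiff_subset_sdiff_of_sdiff_left_eq h)
  · exact hua₁ ▸ card_le_card (sdiff_subset_sdiff_of_sdiff_right_eq h.symm)

theorem eq_of_not_adj_of_not_adj (hℓ : IsJohnsonLabelling G k ℓ) (huv : u ≠ v)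
    (hnuv : ¬ G.Adj u v) (ha : a ∈ G.commonNeighbors u v) (hb : b ∈ G.commonNeighbors u v)
    (hc : c ∈ G.commonNeighbors u v) (hab : a ≠ b) (hnab : ¬ G.Adj a b) (hbc : b ≠ c)
    (hnbc : ¬ G.Adj b c) : a = c := by
  have hu₁ : ∀ {x}, x ∈ G.commonNeighbors u v → #(ℓ u \ ℓ x) = 1 :=
    fun hx => (hℓ.adj_iff (G.mem_commonNeighbors.1 hx).1.ne).1 (G.mem_commonNeighbors.1 hx).1
  have hu₂ : ∀ {x}, x ∈ G.commonNeighbors u v → #(ℓ x \ ℓ u) = 1 :=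
    fun hx => hℓ.card_sdiff_comm u _ ▸ hu₁ hx
  have hout : ∀ {x}, x ∈ G.commonNeighbors u v → ℓ u \ ℓ x ∈ (ℓ u \ ℓ v).powersetCard 1 :=
    fun hx => mem_powersetCard.2 ⟨(hℓ.sdiff_subset_of_mem_commonNeighbors huv hnuv hx).1, hu₁ hx⟩
  have hin : ∀ {x}, x ∈ G.commonNeighbors u v → ℓ x \ ℓ u ∈ (ℓ v \ ℓ u).powersetCard 1 :=
    fun hx => mem_powersetCard.2 ⟨(hℓ.sdiff_subset_of_mem_commonNeighbors huv hnuv hx).2, hu₂ hx⟩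
  have huv₂ := hℓ.card_sdiff_eq_two huv hnuv ha
  have hout₂ : #((ℓ u \ ℓ v).powersetCard 1) ≤ 2 := by
    rw [card_powersetCard, huv₂]; rfl
  have hin₂ : #((ℓ v \ ℓ u).powersetCard 1) ≤ 2 := by
    rw [card_powersetCard, hℓ.card_sdiff_comm, huv₂]; rfl
  have hua := (G.mem_commonNeighbors.1 ha).1
  have hub := (G.mem_commonNeighbors.1 hb).1
  refine hℓ.injective (eq_of_sdiff_eq_of_sdiff_eq (A := ℓ u) ?_ ?_)
  · exact eq_of_ne_of_ne_of_card_le_two hout₂ (hout ha) (hout hb) (hout hc)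
      (hℓ.sdiff_ne_of_not_adj hua hab hnab).1 (hℓ.sdiff_ne_of_not_adj hub hbc hnbc).1
  · exact eq_of_ne_of_ne_of_card_le_two hin₂ (hin ha) (hin hb) (hin hc)
      (hℓ.sdiff_ne_of_not_adj hua hab hnab).2 (hℓ.sdiff_ne_of_not_adj hub hbc hnbc).2

end IsJohnsonLabelling

theorem Labellable.of_embedding {V W : Type*} {G : SimpleGraph V} {H : SimpleGraph W}
    (f : H ↪g G) (hG : Labellable G) : Labellable H := by
  obtain ⟨k, hk, ℓ, hinj, hcard, hadj⟩ := hG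
  refine ⟨k, hk, ℓ ∘ f, hinj.comp f.injective, fun v => hcard (f v), fun u v huv => ?_⟩
  rw [← f.map_adj_iff]
  exact hadj _ _ (f.injective.ne huv)

theorem labellable_induce_of_labelling {V : Type*} {G : SimpleGraph V} {s : Set V} {k : ℕ}
    (hk : 0 < k) (ℓ : V → Finset ℕ) (hinj : s.InjOn ℓ) (hcard : ∀ v ∈ s, #(ℓ v) = k)
    (hadj : ∀ u ∈ s, ∀ v ∈ s, u ≠ v → (G.Adj u v ↔ #(ℓ u ∩ ℓ v) = k - 1)) :
    Labellable (G.induce s) :=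
  ⟨k, hk, fun v => ℓ v, fun u v h => Subtype.ext (hinj u.2 v.2 h), fun v => hcard v v.2,
    fun u v huv => hadj u u.2 v v.2 (Subtype.coe_ne_coe.2 huv)⟩

instance : DecidableRel K2PlusP3.Adj := fun _ _ =>
  decidable_of_iff' _ (SimpleGraph.fromRel_adj _ _ _)

theorem labellable_induce_compl_singleton (v : Fin 5) :
    Labellable (K2PlusP3ᶜ.induce {v}ᶜ) := by
  -- row `v` labels the vertices other than `v`; its `v`-th entry is ignored
  let ℓ : Fin 5 → Fin 5 → Finset ℕ := ![
    ![∅, {1, 2}, {1, 3}, {2, 5}, {1, 4}],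
    ![{1, 2}, ∅, {1, 3}, {2, 5}, {1, 4}],
    ![{1, 2}, {3, 4}, ∅, {1, 3}, {2, 4}],
    ![{1, 4}, {2, 3}, {1, 2}, ∅, {1, 3}],
    ![{1, 2}, {3, 4}, {1, 3}, {2, 4}, ∅]]
  refine labellable_induce_of_labelling two_pos (ℓ v) (fun a ha b hb => ?_) ?_ ?_ <;>
    decide +revert

/-- The 5-vertex graph that is the complement of the disjoint union of `K₂` and
the path `P₃` on three vertices is minimally unlabellable: it is not labellable,
but every proper induced subgraph of it is labellable. -/
theorem compl_K2_plus_P3_minimally_unlabellable :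
    ¬ Labellable K2PlusP3ᶜ ∧
      ∀ s : Set (Fin 5), s ≠ Set.univ → Labellable (K2PlusP3ᶜ.induce s) := by
  refine ⟨fun h => ?_, fun s hs => ?_⟩
  · obtain ⟨k, ℓ, hℓ⟩ := h.exists_isJohnsonLabelling
    have hcommon : ∀ w : Fin 5, 2 ≤ w → w ∈ K2PlusP3ᶜ.commonNeighbors 0 1 := by decide
    have h24 : (2 : Fin 5) = 4 := hℓ.eq_of_not_adj_of_not_adj (by decide) (by decide)
      (hcommon 2 (by decide)) (hcommon 3 (by decide)) (hcommon 4 (by decide))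
      (by decide) (by decide) (by decide) (by decide)
    exact absurd h24 (by decide)
  · obtain ⟨v, hv⟩ := (Set.ne_univ_iff_exists_notMem s).1 hs
    exact (labellable_induce_compl_singleton v).of_embedding
      (SimpleGraph.induceHomOfLE _ (Set.subset_compl_singleton_iff.2 hv))
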